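/- arXiv:1511.04690 — 2 statements merged into one kernel-verified Lean document; each statement's English description precedes it below -/
import Mathlib

section
/- Let Γ̂ ∈ ℝ^{p×p} be symmetric, γ̂ ∈ ℝ^p, β* ∈ ℝ^p, and k, c > 0. Suppose Δ ∈ ℝ^p satisfies: (i) ‖Δ‖₁ ≤ 2√k‖Δ‖₂; (ii) (1/2)ΔᵀΓ̂Δ ≤ ⟨γ̂ - Γ̂β*, Δ⟩; and (iii) ΔᵀΓ̂Δ ≥ 2c‖Δ‖₂². Then ‖Δ‖₂ ≤ (2√k/c)·‖γ̂ - Γ̂β*‖_∞ and ‖Δ‖₁ ≤ (4k/c)·‖γ̂ - Γ̂β*‖_∞. -/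
open Matrix

/-! Restricted strong convexity and the basic inequality give
`c ‖Δ‖₂² ≤ ½ ΔᵀΓ̂Δ ≤ ⟨γ̂ - Γ̂β*, Δ⟩ ≤ ‖γ̂ - Γ̂β*‖_∞ ‖Δ‖₁ ≤ 2√k ‖γ̂ - Γ̂β*‖_∞ ‖Δ‖₂`
by Hölder and the cone condition; dividing by `c ‖Δ‖₂` bounds `‖Δ‖₂`, and the cone condition
once more turns this into the `ℓ¹` bound. -/

theorem dotProduct_le_norm_mul_sum_abs {ι : Type*} [Fintype ι] (v w : ι → ℝ) :
    v ⬝ᵥ w ≤ ‖v‖ * ∑ i, |w i| := by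
  rw [dotProduct, Finset.mul_sum]
  refine Finset.sum_le_sum fun i _ => ?_
  calc v i * w i ≤ |v i| * |w i| := by rw [← abs_mul]; exact le_abs_self _
    _ ≤ ‖v‖ * |w i| := mul_le_mul_of_nonneg_right (norm_le_pi_norm v i) (abs_nonneg _)

theorem le_div_of_mul_sq_le_mul {a c s : ℝ} (ha : 0 ≤ a) (hc : 0 < c) (hs : 0 ≤ s)
    (h : c * s ^ 2 ≤ a * s) : s ≤ a / c := by
  rw [le_div_iff₀ hc]
  rcases hs.eq_or_lt with rfl | hs
  · simpa using ha
  · nlinarith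

theorem error_bound_from_cone_basic_curvature_general
    (p : ℕ) (Γ : Matrix (Fin p) (Fin p) ℝ)
    (γ βstar Δ : Fin p → ℝ) (k c : ℝ) (hk : 0 < k) (hc : 0 < c)
    (hcone : ∑ i, |Δ i| ≤ 2 * Real.sqrt k * Real.sqrt (∑ i, (Δ i) ^ 2))
    (hbasic : (1 / 2) * (Δ ⬝ᵥ Γ.mulVec Δ) ≤ (γ - Γ.mulVec βstar) ⬝ᵥ Δ)
    (hcurv : 2 * c * (∑ i, (Δ i) ^ 2) ≤ Δ ⬝ᵥ Γ.mulVec Δ) :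
    Real.sqrt (∑ i, (Δ i) ^ 2) ≤ (2 * Real.sqrt k / c) * ‖γ - Γ.mulVec βstar‖ ∧
    ∑ i, |Δ i| ≤ (4 * k / c) * ‖γ - Γ.mulVec βstar‖ := by
  set g := γ - Γ.mulVec βstar
  set s := Real.sqrt (∑ i, (Δ i) ^ 2)
  have hs_sq : s ^ 2 = ∑ i, (Δ i) ^ 2 := Real.sq_sqrt (by positivity)
  have hl2 : s ≤ (2 * Real.sqrt k / c) * ‖g‖ := by
    rw [div_mul_eq_mul_div]
    refine le_div_of_mul_sq_le_mul (by positivity) hc (Real.sqrt_nonneg _) ?_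
    calc c * s ^ 2 ≤ (1 / 2) * (Δ ⬝ᵥ Γ.mulVec Δ) := by rw [hs_sq]; linarith
      _ ≤ g ⬝ᵥ Δ := hbasic
      _ ≤ ‖g‖ * ∑ i, |Δ i| := dotProduct_le_norm_mul_sum_abs g Δ
      _ ≤ ‖g‖ * (2 * Real.sqrt k * s) := by gcongr
      _ = 2 * Real.sqrt k * ‖g‖ * s := by ring
  refine ⟨hl2, ?_⟩
  calc ∑ i, |Δ i| ≤ 2 * Real.sqrt k * s := hcone
    _ ≤ 2 * Real.sqrt k * ((2 * Real.sqrt k / c) * ‖g‖) := by gcongr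
    _ = 2 * (Real.sqrt k * Real.sqrt k) * 2 / c * ‖g‖ := by ring
    _ = (4 * k / c) * ‖g‖ := by rw [Real.mul_self_sqrt hk.le]; ring

/-- Statistical error bound skeleton: under the cone condition, the basic
inequality, and the restricted curvature condition, the `ℓ²` and `ℓ¹` errors
are controlled by `‖γ̂ - Γ̂β*‖_∞` (the sup norm on `Fin p → ℝ`). -/
theorem error_bound_from_cone_basic_curvature
    (p : ℕ) (Γ : Matrix (Fin p) (Fin p) ℝ) (hΓ : Γ.IsSymm)
    (γ βstar Δ : Fin p → ℝ) (k c : ℝ) (hk : 0 < k) (hc : 0 < c)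
    (hcone : ∑ i, |Δ i| ≤ 2 * Real.sqrt k * Real.sqrt (∑ i, (Δ i) ^ 2))
    (hbasic : (1 / 2) * (Δ ⬝ᵥ Γ.mulVec Δ) ≤ (γ - Γ.mulVec βstar) ⬝ᵥ Δ)
    (hcurv : 2 * c * (∑ i, (Δ i) ^ 2) ≤ Δ ⬝ᵥ Γ.mulVec Δ) :
    Real.sqrt (∑ i, (Δ i) ^ 2) ≤ (2 * Real.sqrt k / c) * ‖γ - Γ.mulVec βstar‖ ∧
    ∑ i, |Δ i| ≤ (4 * k / c) * ‖γ - Γ.mulVec βstar‖ :=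
  error_bound_from_cone_basic_curvature_general p Γ γ βstar Δ k c hk hc hcone hbasic hcurv
end

section
/- Let Σ ∈ ℝ^{p×p} be symmetric positive definite with smallest eigenvalue λ_min(Σ) > 0, and let Γ̂ ∈ ℝ^{p×p} satisfy ‖Γ̂ - Σ‖_∞ ≤ λ_min(Σ)/(16k) entrywise, where k ≥ 1. Then for all Δ ∈ ℝ^p with ‖Δ‖₁ ≤ 2√k‖Δ‖₂, one has ΔᵀΓ̂Δ ≥ (3/4)·λ_min(Σ)·‖Δ‖₂². -/
/-!
Write `Γ = Σ + (Γ - Σ)`. The quadratic form of the perturbation is bounded by its largest entry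
times `‖Δ‖₁²`, and on the cone `‖Δ‖₁ ≤ 2√k ‖Δ‖₂` this is at most `(λ_min / 16k) · 4k ‖Δ‖₂²`,
a quarter of the curvature `λ_min ‖Δ‖₂²` supplied by `Σ`.
-/

open Matrix

theorem abs_dotProduct_mulVec_le {R m n : Type*} [CommRing R] [LinearOrder R]
    [IsStrictOrderedRing R] [Fintype m] [Fintype n] (M : Matrix m n R) (c : R)
    (hM : ∀ i j, |M i j| ≤ c) (v : m → R) (w : n → R) :
    |v ⬝ᵥ M *ᵥ w| ≤ c * (∑ i, |v i|) * ∑ j, |w j| := by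
  calc |v ⬝ᵥ M *ᵥ w| = |∑ i, ∑ j, v i * (M i j * w j)| := by
        simp only [dotProduct, mulVec, Finset.mul_sum]
    _ ≤ ∑ i, ∑ j, |v i| * (|M i j| * |w j|) := by
        refine (Finset.abs_sum_le_sum_abs _ _).trans (Finset.sum_le_sum fun i _ => ?_)
        refine (Finset.abs_sum_le_sum_abs _ _).trans_eq (Finset.sum_congr rfl fun j _ => ?_)
        rw [abs_mul, abs_mul]
    _ ≤ ∑ i, ∑ j, |v i| * (c * |w j|) := by
        gcongr with i _ j _
        exact hM i j
    _ = c * (∑ i, |v i|) * ∑ j, |w j| := by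
        simp only [mul_assoc, mul_left_comm _ c, ← Finset.mul_sum, Finset.sum_mul]

theorem sq_sum_abs_le_of_sum_abs_le {ι : Type*} [Fintype ι] (v : ι → ℝ) {k : ℝ} (hk : 0 ≤ k)
    (hv : ∑ i, |v i| ≤ 2 * Real.sqrt k * Real.sqrt (∑ i, v i ^ 2)) :
    (∑ i, |v i|) ^ 2 ≤ 4 * k * ∑ i, v i ^ 2 := by
  have hS : 0 ≤ ∑ i, v i ^ 2 := by positivity
  calc (∑ i, |v i|) ^ 2 ≤ (2 * Real.sqrt k * Real.sqrt (∑ i, v i ^ 2)) ^ 2 := by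
        gcongr
    _ = 4 * k * ∑ i, v i ^ 2 := by
        rw [mul_pow, mul_pow, Real.sq_sqrt hk, Real.sq_sqrt hS]
        norm_num

theorem restricted_curvature_of_entrywise_perturbation_general
    (p : ℕ) (Sig Γ : Matrix (Fin p) (Fin p) ℝ)
    (lmin : ℝ) (hl : 0 < lmin)
    (hmin : ∀ u : Fin p → ℝ, lmin * (∑ i, (u i) ^ 2) ≤ u ⬝ᵥ Sig.mulVec u)
    (k : ℝ) (hk : 1 ≤ k)
    (hpert : ∀ i j, |Γ i j - Sig i j| ≤ lmin / (16 * k)) :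
    ∀ Δ : Fin p → ℝ,
      ∑ i, |Δ i| ≤ 2 * Real.sqrt k * Real.sqrt (∑ i, (Δ i) ^ 2) →
      (3 / 4) * lmin * (∑ i, (Δ i) ^ 2) ≤ Δ ⬝ᵥ Γ.mulVec Δ := by
  intro Δ hΔ
  have hk0 : 0 < k := one_pos.trans_le hk
  have hsplit : Δ ⬝ᵥ Γ *ᵥ Δ = Δ ⬝ᵥ Sig *ᵥ Δ + Δ ⬝ᵥ (Γ - Sig) *ᵥ Δ := by
    rw [sub_mulVec, dotProduct_sub, add_sub_cancel]
  have herr : |Δ ⬝ᵥ (Γ - Sig) *ᵥ Δ| ≤ lmin / (16 * k) * (∑ i, |Δ i|) ^ 2 := by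
    rw [sq, ← mul_assoc]
    exact abs_dotProduct_mulVec_le _ _ hpert Δ Δ
  have hcone : lmin / (16 * k) * (∑ i, |Δ i|) ^ 2 ≤ lmin / 4 * ∑ i, Δ i ^ 2 := by
    calc lmin / (16 * k) * (∑ i, |Δ i|) ^ 2
        ≤ lmin / (16 * k) * (4 * k * ∑ i, Δ i ^ 2) := by
          gcongr
          exact sq_sum_abs_le_of_sum_abs_le Δ hk0.le hΔ
      _ = lmin / 4 * ∑ i, Δ i ^ 2 := by
          field_simp
          ring
  linarith [hmin Δ, (abs_le.mp herr).1]

/-- If `Σ` is symmetric positive definite with smallest eigenvalue `lmin > 0`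
(so `uᵀΣu ≥ lmin‖u‖₂²` for all `u`) and `Γ̂` is entrywise within
`lmin/(16k)` of `Σ`, then on the cone `‖Δ‖₁ ≤ 2√k‖Δ‖₂` we have
`ΔᵀΓ̂Δ ≥ (3/4) lmin ‖Δ‖₂²`. -/
theorem restricted_curvature_of_entrywise_perturbation
    (p : ℕ) (Sig Γ : Matrix (Fin p) (Fin p) ℝ) (hSsymm : Sig.IsSymm)
    (lmin : ℝ) (hl : 0 < lmin)
    (hmin : ∀ u : Fin p → ℝ, lmin * (∑ i, (u i) ^ 2) ≤ u ⬝ᵥ Sig.mulVec u)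
    (k : ℝ) (hk : 1 ≤ k)
    (hpert : ∀ i j, |Γ i j - Sig i j| ≤ lmin / (16 * k)) :
    ∀ Δ : Fin p → ℝ,
      ∑ i, |Δ i| ≤ 2 * Real.sqrt k * Real.sqrt (∑ i, (Δ i) ^ 2) →
      (3 / 4) * lmin * (∑ i, (Δ i) ^ 2) ≤ Δ ⬝ᵥ Γ.mulVec Δ :=
  restricted_curvature_of_entrywise_perturbation_general p Sig Γ lmin hl hmin k hk hpert
end
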